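/- Let (C,A) be observable and suppose the equation [[A,B],[C,D]]·[0;R₀] = [Π α₀; 0] holds, i.e., BR₀ = Πα₀ and DR₀ = 0, where additionally AΠ + BH = ΠΛ and CΠ + DH = 0. Then every column of the rational function K₀(z) = R₀ + H(zI−Λ)^{-1}α₀ lies in the kernel of F(z) = D + C(zI−A)^{-1}B, i.e., F(z)K₀(z) = 0. -/
import Mathlib


open Matrix

noncomputable section

/-- Map a complex matrix entrywise to rational functions. -/
def mc {a b : ℕ} (M : Matrix (Fin a) (Fin b) ℂ) : Matrix (Fin a) (Fin b) (RatFunc ℂ) :=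
  M.map (⇑(RatFunc.C : ℂ →+* RatFunc ℂ))

/-- The resolvent `(z I − M)⁻¹` as a matrix of rational functions. -/
def res {a : ℕ} (M : Matrix (Fin a) (Fin a) ℂ) : Matrix (Fin a) (Fin a) (RatFunc ℂ) :=
  ((Matrix.scalar (Fin a) (RatFunc.X : RatFunc ℂ)) - mc M)⁻¹

/-- The "anti-resolvent" `(z I + M)⁻¹`, used for para-hermitian conjugates. -/
def resneg {a : ℕ} (M : Matrix (Fin a) (Fin a) ℂ) : Matrix (Fin a) (Fin a) (RatFunc ℂ) :=
  ((Matrix.scalar (Fin a) (RatFunc.X : RatFunc ℂ)) + mc M)⁻¹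

/-- Observability of a pair `(C, A)`. -/
def Observable {p n : ℕ} (C : Matrix (Fin p) (Fin n) ℂ) (A : Matrix (Fin n) (Fin n) ℂ) : Prop :=
  ∀ v : Fin n → ℂ, (∀ k : ℕ, C *ᵥ ((A ^ k) *ᵥ v) = 0) → v = 0

/-- Controllability of a pair `(Λ, G)`. -/
def Controllable {r m : ℕ} (L : Matrix (Fin r) (Fin r) ℂ) (G : Matrix (Fin r) (Fin m) ℂ) : Prop :=
  ∀ y : Fin r → ℂ, (∀ k : ℕ, y ᵥ* ((L ^ k) * G) = 0) → y = 0

/-- The range (column space) of a matrix, as a submodule of `ℂⁿ`. -/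
def mrange {a b : ℕ} (M : Matrix (Fin a) (Fin b) ℂ) : Submodule ℂ (Fin a → ℂ) :=
  LinearMap.range M.mulVecLin

/-- The set of states reachable from the origin by a finite input sequence
producing identically zero output along the way (the minimal input-containing
subspace `C*(Σ)`). -/
def OutNullReach {n p q : ℕ} (A : Matrix (Fin n) (Fin n) ℂ) (B : Matrix (Fin n) (Fin q) ℂ)
    (C : Matrix (Fin p) (Fin n) ℂ) (D : Matrix (Fin p) (Fin q) ℂ) (x : Fin n → ℂ) : Prop :=
  ∃ (j : ℕ) (ξ : ℕ → (Fin n → ℂ)) (u : ℕ → (Fin q → ℂ)),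
    ξ 0 = 0 ∧ (∀ i < j, ξ (i + 1) = A *ᵥ ξ i + B *ᵥ u i ∧ C *ᵥ ξ i + D *ᵥ u i = 0) ∧ ξ j = x


lemma mc_mul' {a b c : ℕ} (M : Matrix (Fin a) (Fin b) ℂ) (N : Matrix (Fin b) (Fin c) ℂ) :
    mc (M * N) = mc M * mc N := Matrix.map_mul

lemma mc_sub' {a b : ℕ} (M N : Matrix (Fin a) (Fin b) ℂ) :
    mc (M - N) = mc M - mc N := by ext i j; simp [mc]

lemma mc_neg' {a b : ℕ} (M : Matrix (Fin a) (Fin b) ℂ) :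
    mc (-M) = -mc M := by ext i j; simp [mc]

lemma scharmatrix' {a : ℕ} (M : Matrix (Fin a) (Fin a) ℂ) :
    (Matrix.scalar (Fin a) (RatFunc.X : RatFunc ℂ)) - mc M =
      (Matrix.charmatrix M).map (algebraMap (Polynomial ℂ) (RatFunc ℂ)) := by
  ext i j
  simp [Matrix.charmatrix, mc, Matrix.scalar, Matrix.diagonal, Matrix.one_apply, apply_ite,
    RatFunc.algebraMap_X, RatFunc.algebraMap_C]

lemma det_ne' {a : ℕ} (M : Matrix (Fin a) (Fin a) ℂ) :
    ((Matrix.scalar (Fin a) (RatFunc.X : RatFunc ℂ)) - mc M).det ≠ 0 := by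
  rw [scharmatrix', ← RingHom.mapMatrix_apply, ← RingHom.map_det]
  simp only [ne_eq, map_eq_zero_iff _ (IsFractionRing.injective (Polynomial ℂ) (RatFunc ℂ))]
  exact (Matrix.charpoly_monic M).ne_zero

lemma res_mul' {a : ℕ} (M : Matrix (Fin a) (Fin a) ℂ) :
    res M * ((Matrix.scalar (Fin a) (RatFunc.X : RatFunc ℂ)) - mc M) = 1 :=
  Matrix.nonsing_inv_mul _ (isUnit_iff_ne_zero.mpr (det_ne' M))

lemma mul_res' {a : ℕ} (M : Matrix (Fin a) (Fin a) ℂ) :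
    ((Matrix.scalar (Fin a) (RatFunc.X : RatFunc ℂ)) - mc M) * res M = 1 :=
  Matrix.mul_nonsing_inv _ (isUnit_iff_ne_zero.mpr (det_ne' M))

/-- from `BR₀ = Πα₀`, `DR₀ = 0`, `AΠ+BH = ΠΛ`, `CΠ+DH = 0` one gets
`F(z) · (R₀ + H(zI−Λ)⁻¹α₀) = 0`. -/
theorem stmt8 {n p q r m : ℕ}
    (A : Matrix (Fin n) (Fin n) ℂ) (B : Matrix (Fin n) (Fin q) ℂ)
    (C : Matrix (Fin p) (Fin n) ℂ) (D : Matrix (Fin p) (Fin q) ℂ)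
    (Pm : Matrix (Fin n) (Fin r) ℂ) (H : Matrix (Fin q) (Fin r) ℂ)
    (Λ : Matrix (Fin r) (Fin r) ℂ)
    (R₀ : Matrix (Fin q) (Fin m) ℂ) (α₀ : Matrix (Fin r) (Fin m) ℂ)
    (hobs : Observable C A)
    (hBR : B * R₀ = Pm * α₀) (hDR : D * R₀ = 0)
    (h1 : A * Pm + B * H = Pm * Λ) (h2 : C * Pm + D * H = 0) :
    (mc D + mc C * res A * mc B) * (mc R₀ + mc H * res Λ * mc α₀) = 0 := by
  set SA := (Matrix.scalar (Fin n) (RatFunc.X : RatFunc ℂ)) - mc A with hSA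
  set SL := (Matrix.scalar (Fin r) (RatFunc.X : RatFunc ℂ)) - mc Λ with hSL
  have e0 : mc D * mc R₀ = 0 := by
    rw [← mc_mul', hDR]; ext i j; simp [mc]
  have e1 : mc B * mc R₀ = mc Pm * mc α₀ := by rw [← mc_mul', ← mc_mul', hBR]
  have e2 : mc D * mc H = -(mc C * mc Pm) := by
    rw [← mc_mul', ← mc_mul', eq_neg_of_add_eq_zero_left h2, mc_neg', neg_neg]
  have hBH : mc B * mc H = SA * mc Pm - mc Pm * SL := by
    have hb : B * H = Pm * Λ - A * Pm := eq_sub_of_add_eq' h1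
    have hX1 : (Matrix.scalar (Fin n) (RatFunc.X : RatFunc ℂ)) * mc Pm
        = mc Pm * (Matrix.scalar (Fin r) (RatFunc.X : RatFunc ℂ)) := by
      ext i j
      simp [Matrix.scalar_apply, Matrix.diagonal_mul, Matrix.mul_diagonal, mul_comm]
    rw [← mc_mul', hb, mc_sub', mc_mul', mc_mul', hSA, hSL, Matrix.sub_mul, Matrix.mul_sub, hX1]
    abel
  have e3 : res A * (mc B * mc H) * res Λ = mc Pm * res Λ - res A * mc Pm := by
    rw [hBH, Matrix.mul_sub, Matrix.sub_mul, ← Matrix.mul_assoc, res_mul', Matrix.one_mul,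
      Matrix.mul_assoc (res A), Matrix.mul_assoc (mc Pm), mul_res', Matrix.mul_one]
  calc (mc D + mc C * res A * mc B) * (mc R₀ + mc H * res Λ * mc α₀)
      = mc D * mc R₀ + mc C * (res A * (mc B * mc R₀)) + mc D * mc H * (res Λ * mc α₀)
        + mc C * (res A * (mc B * mc H) * res Λ) * mc α₀ := by
        simp only [Matrix.add_mul, Matrix.mul_add, Matrix.mul_assoc]
        abel
    _ = 0 + mc C * (res A * (mc Pm * mc α₀)) + (-(mc C * mc Pm)) * (res Λ * mc α₀)
        + mc C * (mc Pm * res Λ - res A * mc Pm) * mc α₀ := by rw [e0, e1, e2, e3]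
    _ = 0 := by
        simp only [Matrix.sub_mul, Matrix.mul_sub, Matrix.neg_mul, Matrix.mul_assoc, zero_add]
        abel
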